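/- arXiv:1709.00563 — 2 statements merged into one kernel-verified Lean document; each statement's English description precedes it below -/
import Mathlib

section
/- Let K(w₁, w₂) = d(w₁)^{1/2} d(w₂)^{1/2} |w₁ − w₂|^{−3} for w₁ ∈ Ω₊ and w₂ ∈ Ω₋. Then for every fixed w₂ ∈ Ω₋, ∬_{Ω₊} K(w₁, w₂) dλ(w₁) ≤ 4π, and symmetrically for every fixed w₁ ∈ Ω₊, ∬_{Ω₋} K(w₁, w₂) dλ(w₂) ≤ 4π. -/
/-!
Both distances `d(w₁)` and `d(w₂)` are at most `|w₁ - w₂|`, since the segment `[w₁, w₂]` crosses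
`Γ`. Hence, for fixed `w₂` with `δ = d(w₂) > 0`, the kernel is at most `δ^{1/2} |w₁ - w₂|^{-5/2}`
on the region `|w₁ - w₂| ≥ δ`, and in polar coordinates around `w₂` this integrates to
`δ^{1/2} · 2π ∫_δ^∞ r^{-3/2} dr = 4π`.
-/

open Metric Set Filter Complex MeasureTheory

theorem Complex.lintegral_comp_norm {f : ℝ → ENNReal} (hf : Measurable f) :
    ∫⁻ z : ℂ, f ‖z‖ = ENNReal.ofReal (2 * Real.pi) * ∫⁻ r in Ioi 0, ENNReal.ofReal r * f r := by
  rw [← Complex.lintegral_comp_polarCoord_symm, polarCoord_target,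
    setLIntegral_congr_fun (measurableSet_Ioi.prod measurableSet_Ioo)
      (g := fun p => ENNReal.ofReal p.1 * f p.1) fun p hp => by
        simp [abs_of_pos (show (0 : ℝ) < p.1 from hp.1)],
    Measure.volume_eq_prod, setLIntegral_prod _ (by fun_prop)]
  simp_rw [setLIntegral_const, Real.volume_Ioo, lintegral_mul_const' _ _ ENNReal.ofReal_ne_top]
  rw [mul_comm, sub_neg_eq_add, ← two_mul]

theorem lintegral_Ici_rpow_of_lt {a R : ℝ} (ha : a < -1) (hR : 0 < R) :
    ∫⁻ r in Ici R, ENNReal.ofReal (r ^ a) = ENNReal.ofReal (-R ^ (a + 1) / (a + 1)) := by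
  rw [setLIntegral_congr Ioi_ae_eq_Ici.symm, ← integral_Ioi_rpow_of_lt ha hR,
    ofReal_integral_eq_lintegral_ofReal (integrableOn_Ioi_rpow_of_lt ha hR)]
  exact (ae_restrict_iff' measurableSet_Ioi).2
    (.of_forall fun r hr => Real.rpow_nonneg (hR.trans hr).le _)

theorem Complex.setLIntegral_compl_ball_dist_rpow_neg (c : ℂ) {R s : ℝ} (hR : 0 < R)
    (hs : 2 < s) :
    ∫⁻ w in (ball c R)ᶜ, ENNReal.ofReal (dist w c ^ (-s)) =
      ENNReal.ofReal (2 * Real.pi / (s - 2) * R ^ (2 - s)) := by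
  set F : ℝ → ENNReal := (Ici R).indicator fun r => ENNReal.ofReal (r ^ (-s)) with hF_def
  have hF : Measurable F :=
    (by fun_prop : Measurable fun r : ℝ => ENNReal.ofReal (r ^ (-s))).indicator measurableSet_Ici
  calc ∫⁻ w in (ball c R)ᶜ, ENNReal.ofReal (dist w c ^ (-s))
      = ∫⁻ w, F ‖w - c‖ := by
        rw [← lintegral_indicator measurableSet_ball.compl]
        congr 1 with w
        simp [F, indicator, dist_eq]
    _ = ENNReal.ofReal (2 * Real.pi) * ∫⁻ r in Ici R, ENNReal.ofReal (r ^ (1 - s)) := by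
        rw [lintegral_sub_right_eq_self (fun z => F ‖z‖), Complex.lintegral_comp_norm hF, hF_def]
        simp_rw [← indicator_mul_right]
        rw [setLIntegral_indicator measurableSet_Ici, inter_eq_left.2 (Ici_subset_Ioi.2 hR)]
        refine congrArg _ (setLIntegral_congr_fun measurableSet_Ici fun r hr => ?_)
        have hr : 0 < r := hR.trans_le hr
        rw [← ENNReal.ofReal_mul hr.le, sub_eq_add_neg, Real.rpow_add hr, Real.rpow_one]
    _ = ENNReal.ofReal (2 * Real.pi / (s - 2) * R ^ (2 - s)) := by
        rw [lintegral_Ici_rpow_of_lt (by linarith) hR, ← ENNReal.ofReal_mul (by positivity),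
          show 1 - s + 1 = -(s - 2) by ring, show 2 - s = -(s - 2) by ring]
        field_simp

theorem exists_mem_segment_im_eq_of_lt_of_lt {a : ℝ → ℝ} (ha : Continuous a) {w₁ w₂ : ℂ}
    (h₁ : a w₁.re < w₁.im) (h₂ : w₂.im < a w₂.re) :
    ∃ p ∈ segment ℝ w₁ w₂, p.im = a p.re := by
  obtain ⟨p, hp, hp_eq⟩ := (convex_segment w₁ w₂).isPreconnected.intermediate_value₂
    (left_mem_segment ℝ w₁ w₂) (right_mem_segment ℝ w₁ w₂)
    (ha.comp continuous_re).continuousOn continuous_im.continuousOn h₁.le h₂.le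
  exact ⟨p, hp, hp_eq.symm⟩

theorem infDist_graph_le_dist_of_lt_of_lt {a : ℝ → ℝ} (ha : Continuous a) {w₁ w₂ : ℂ}
    (h₁ : a w₁.re < w₁.im) (h₂ : w₂.im < a w₂.re) :
    infDist w₁ {w : ℂ | w.im = a w.re} ≤ dist w₁ w₂ ∧
      infDist w₂ {w : ℂ | w.im = a w.re} ≤ dist w₁ w₂ := by
  obtain ⟨p, hp, hpΓ : p ∈ {w : ℂ | w.im = a w.re}⟩ :=
    exists_mem_segment_im_eq_of_lt_of_lt ha h₁ h₂
  have hsum := dist_add_dist_of_mem_segment hp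
  constructor
  · linarith [infDist_le_dist_of_mem (x := w₁) hpΓ, dist_nonneg (x := p) (y := w₂)]
  · linarith [infDist_le_dist_of_mem (x := w₂) hpΓ, dist_nonneg (x := w₁) (y := p),
      dist_comm w₂ p]

theorem sqrt_mul_sqrt_div_pow_three_le {x y r : ℝ} (hx : x ≤ r) (hr : 0 < r) :
    √x * √y / r ^ 3 ≤ √y * r ^ (-(5 / 2) : ℝ) := by
  have hr_rpow : √r / r ^ 3 = r ^ (-(5 / 2) : ℝ) := by
    rw [Real.sqrt_eq_rpow, ← Real.rpow_natCast r 3, ← Real.rpow_sub hr]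
    norm_num
  calc √x * √y / r ^ 3 = √x / r ^ 3 * √y := by ring
    _ ≤ √r / r ^ 3 * √y := by gcongr
    _ = √y * r ^ (-(5 / 2) : ℝ) := by rw [hr_rpow, mul_comm]

theorem setLIntegral_sqrt_infDist_mul_div_dist_pow_three_le {G S : Set ℂ} (hS : MeasurableSet S)
    (c : ℂ) (hS_le : ∀ w ∈ S, infDist w G ≤ dist w c ∧ infDist c G ≤ dist w c) :
    ∫⁻ w in S, ENNReal.ofReal (√(infDist w G) * √(infDist c G) / dist w c ^ 3) ≤
      ENNReal.ofReal (4 * Real.pi) := by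
  obtain hδ | hδ := (infDist_nonneg (x := c) (s := G)).eq_or_lt
  · simp [← hδ]
  set δ := infDist c G
  calc ∫⁻ w in S, ENNReal.ofReal (√(infDist w G) * √δ / dist w c ^ 3)
      ≤ ∫⁻ w in S, ENNReal.ofReal (√δ * dist w c ^ (-(5 / 2) : ℝ)) :=
        setLIntegral_mono' hS fun w hw => ENNReal.ofReal_le_ofReal <|
          sqrt_mul_sqrt_div_pow_three_le (hS_le w hw).1 (hδ.trans_le (hS_le w hw).2)
    _ ≤ ∫⁻ w in (ball c δ)ᶜ, ENNReal.ofReal (√δ * dist w c ^ (-(5 / 2) : ℝ)) :=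
        lintegral_mono' (Measure.restrict_mono (fun w hw => (hS_le w hw).2.not_gt) le_rfl) le_rfl
    _ = ENNReal.ofReal √δ * ENNReal.ofReal (2 * Real.pi / (5 / 2 - 2) * δ ^ (2 - 5 / 2 : ℝ)) := by
        simp_rw [ENNReal.ofReal_mul (Real.sqrt_nonneg δ)]
        rw [lintegral_const_mul' _ _ ENNReal.ofReal_ne_top,
          Complex.setLIntegral_compl_ball_dist_rpow_neg c hδ (by norm_num)]
    _ = ENNReal.ofReal (4 * Real.pi) := by
        rw [← ENNReal.ofReal_mul (Real.sqrt_nonneg δ), Real.sqrt_eq_rpow]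
        congr 1
        rw [show (2 - 5 / 2 : ℝ) = -(1 / 2) by norm_num, Real.rpow_neg hδ.le]
        field_simp
        norm_num

theorem schur_kernel_bound_general
    (a : ℝ → ℝ) (M : ℝ) (ha : LipschitzWith (Real.toNNReal M) a)
    (Γ : Set ℂ) (hΓ : Γ = {w : ℂ | w.im = a w.re})
    (Ωp : Set ℂ) (hΩp : Ωp = {w : ℂ | a w.re < w.im})
    (Ωm : Set ℂ) (hΩm : Ωm = {w : ℂ | w.im < a w.re})
    (K : ℂ → ℂ → ℝ)
    (hK : ∀ w₁ w₂, K w₁ w₂ =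
      Real.sqrt (infDist w₁ Γ) * Real.sqrt (infDist w₂ Γ) / ‖w₁ - w₂‖ ^ 3) :
    (∀ w₂ ∈ Ωm, ∫⁻ w₁ in Ωp, ENNReal.ofReal (K w₁ w₂) ≤
        ENNReal.ofReal (4 * Real.pi)) ∧
    (∀ w₁ ∈ Ωp, ∫⁻ w₂ in Ωm, ENNReal.ofReal (K w₁ w₂) ≤
        ENNReal.ofReal (4 * Real.pi)) := by
  subst hΓ hΩp hΩm
  have hcont := ha.continuous
  have hΩp_meas := (isOpen_lt (hcont.comp continuous_re) continuous_im).measurableSet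
  have hΩm_meas := (isOpen_lt continuous_im (hcont.comp continuous_re)).measurableSet
  refine ⟨fun w₂ hw₂ => ?_, fun w₁ hw₁ => ?_⟩
  · simp_rw [hK, ← dist_eq]
    exact setLIntegral_sqrt_infDist_mul_div_dist_pow_three_le hΩp_meas w₂ fun w hw =>
      infDist_graph_le_dist_of_lt_of_lt hcont hw hw₂
  · simp_rw [hK, ← dist_eq, dist_comm w₁, mul_comm (√(infDist w₁ _))]
    exact setLIntegral_sqrt_infDist_mul_div_dist_pow_three_le hΩm_meas w₁ fun w hw => by
      simpa only [dist_comm w₁ w, and_comm] using infDist_graph_le_dist_of_lt_of_lt hcont hw₁ hw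

/-- Schur-test bounds for the kernel `K(w₁,w₂) = d(w₁)^{1/2} d(w₂)^{1/2} |w₁-w₂|^{-3}`:
for every fixed `w₂ ∈ Ω₋`, `∬_{Ω₊} K(w₁,w₂) dλ(w₁) ≤ 4π`, and for every fixed
`w₁ ∈ Ω₊`, `∬_{Ω₋} K(w₁,w₂) dλ(w₂) ≤ 4π`. Here `d(w) = dist(w,Γ)` and `Ω₊, Ω₋` are
the domains above and below the Lipschitz graph `Γ`. -/
theorem schur_kernel_bound
    (a : ℝ → ℝ) (M : ℝ) (hM : 0 ≤ M) (ha : LipschitzWith (Real.toNNReal M) a)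
    (Γ : Set ℂ) (hΓ : Γ = {w : ℂ | w.im = a w.re})
    (Ωp : Set ℂ) (hΩp : Ωp = {w : ℂ | a w.re < w.im})
    (Ωm : Set ℂ) (hΩm : Ωm = {w : ℂ | w.im < a w.re})
    (K : ℂ → ℂ → ℝ)
    (hK : ∀ w₁ w₂, K w₁ w₂ =
      Real.sqrt (infDist w₁ Γ) * Real.sqrt (infDist w₂ Γ) / ‖w₁ - w₂‖ ^ 3) :
    (∀ w₂ ∈ Ωm, ∫⁻ w₁ in Ωp, ENNReal.ofReal (K w₁ w₂) ≤
        ENNReal.ofReal (4 * Real.pi)) ∧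
    (∀ w₁ ∈ Ωp, ∫⁻ w₂ in Ωm, ENNReal.ofReal (K w₁ w₂) ≤
        ENNReal.ofReal (4 * Real.pi)) :=
  schur_kernel_bound_general a M ha Γ hΓ Ωp hΩp Ωm hΩm K hK
end

section
/- The integral operator S from L²(Ω₊, dλ) to L²(Ω₋, dλ) with kernel K(w₁, w₂) = d(w₁)^{1/2} d(w₂)^{1/2} |w₁ − w₂|^{−3} is bounded with operator norm at most 4π. -/
/-!
For `w₁ ∈ Ω₊` and `w₂ ∈ Ω₋` the segment `[w₁, w₂]` crosses `Γ`, so both `d(w₁)` and `d(w₂)` are at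
most `|w₁ - w₂|`. Hence, for fixed `w₂`, the kernel is dominated by
`d(w₂)^{1/2} |w₁ - w₂|^{-5/2}` on `{|w₁ - w₂| ≥ d(w₂)}`, whose integral over the plane is
`d(w₂)^{1/2} · 2π · 2 d(w₂)^{-1/2} = 4π`. The same holds with the roles of `w₁` and `w₂`
exchanged, and Schur's test (the Cauchy–Schwarz inequality against the measure `K(·, w₂) dλ`,
followed by Tonelli) gives the bound.
-/

open Metric Set Complex MeasureTheory
open scoped ENNReal

section Schur

variable {α β : Type*} [MeasurableSpace α] [MeasurableSpace β] {μ : Measure α} {ν : Measure β}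

theorem ENNReal.sq_lintegral_mul_le {k g : α → ℝ≥0∞} (hk : AEMeasurable k μ)
    (hg : AEMeasurable g μ) :
    (∫⁻ a, k a * g a ∂μ) ^ 2 ≤ (∫⁻ a, k a ∂μ) * ∫⁻ a, k a * g a ^ 2 ∂μ := by
  have hsq : ∀ x : ℝ≥0∞, (x ^ (2⁻¹ : ℝ)) ^ 2 = x := fun x => by
    rw [← ENNReal.rpow_natCast, ← ENNReal.rpow_mul]; norm_num
  have hsqrt : ∀ x : ℝ≥0∞, (x ^ 2) ^ (2⁻¹ : ℝ) = x := fun x => by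
    rw [← ENNReal.rpow_natCast, ← ENNReal.rpow_mul]; norm_num
  have hsplit : ∀ a, k a ^ (2⁻¹ : ℝ) * (k a * g a ^ 2) ^ (2⁻¹ : ℝ) = k a * g a := fun a => by
    rw [ENNReal.mul_rpow_of_nonneg _ _ (by norm_num), ← mul_assoc, ← sq, hsq, hsqrt]
  have holder := lintegral_mul_norm_pow_le (g := fun a => k a * g a ^ 2) hk
    (hk.mul (hg.pow_const 2)) (p := 2⁻¹) (q := 2⁻¹) (by norm_num) (by norm_num) (by norm_num)
  simp only [hsplit] at holder
  calc (∫⁻ a, k a * g a ∂μ) ^ 2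
      ≤ ((∫⁻ a, k a ∂μ) ^ (2⁻¹ : ℝ) * (∫⁻ a, k a * g a ^ 2 ∂μ) ^ (2⁻¹ : ℝ)) ^ 2 := by gcongr
    _ = (∫⁻ a, k a ∂μ) * ∫⁻ a, k a * g a ^ 2 ∂μ := by rw [mul_pow, hsq, hsq]

theorem sq_eLpNorm_two {ε : Type*} [ENorm ε] (f : α → ε) :
    eLpNorm f 2 μ ^ 2 = ∫⁻ a, ‖f a‖ₑ ^ 2 ∂μ := by
  simpa using eLpNorm_nnreal_pow_eq_lintegral (μ := μ) (f := f) (p := 2) two_ne_zero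

variable [SFinite μ] [SFinite ν] {k : α → β → ℝ≥0∞} {C : ℝ≥0∞}

theorem lintegral_sq_lintegral_mul_le_of_schur (hk : Measurable (Function.uncurry k))
    (hcol : ∀ᵐ y ∂ν, ∫⁻ x, k x y ∂μ ≤ C) (hrow : ∀ᵐ x ∂μ, ∫⁻ y, k x y ∂ν ≤ C)
    {g : α → ℝ≥0∞} (hg : AEMeasurable g μ) :
    ∫⁻ y, (∫⁻ x, k x y * g x ∂μ) ^ 2 ∂ν ≤ C ^ 2 * ∫⁻ x, g x ^ 2 ∂μ := by
  have hkg : AEMeasurable (Function.uncurry fun x y => k x y * g x ^ 2) (μ.prod ν) :=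
    hk.aemeasurable.mul (hg.pow_const 2).comp_fst
  calc ∫⁻ y, (∫⁻ x, k x y * g x ∂μ) ^ 2 ∂ν
      ≤ ∫⁻ y, C * ∫⁻ x, k x y * g x ^ 2 ∂μ ∂ν := by
        refine lintegral_mono_ae (hcol.mono fun y hy => ?_)
        exact (ENNReal.sq_lintegral_mul_le (hk.comp measurable_prodMk_right).aemeasurable hg).trans
          (mul_le_mul_left hy _)
    _ = C * ∫⁻ x, (∫⁻ y, k x y ∂ν) * g x ^ 2 ∂μ := by
        rw [lintegral_const_mul'' _ hkg.lintegral_prod_left, ← lintegral_lintegral_swap hkg]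
        congr 1
        exact lintegral_congr fun x => lintegral_mul_const _ (hk.comp measurable_prodMk_left)
    _ ≤ C * ∫⁻ x, C * g x ^ 2 ∂μ := by
        gcongr 1
        exact lintegral_mono_ae (hrow.mono fun x hx => mul_le_mul_left hx _)
    _ = C ^ 2 * ∫⁻ x, g x ^ 2 ∂μ := by
        rw [lintegral_const_mul'' _ (hg.pow_const 2), ← mul_assoc, sq]

theorem eLpNorm_integral_smul_le_of_schur {E : Type*} [NormedAddCommGroup E] [NormedSpace ℝ E]
    {K : α → β → ℝ} (hK : Measurable (Function.uncurry K))
    (hcol : ∀ᵐ y ∂ν, ∫⁻ x, ‖K x y‖ₑ ∂μ ≤ C) (hrow : ∀ᵐ x ∂μ, ∫⁻ y, ‖K x y‖ₑ ∂ν ≤ C)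
    {F : α → E} (hF : AEStronglyMeasurable F μ) :
    eLpNorm (fun y => ∫ x, K x y • F x ∂μ) 2 ν ≤ C * eLpNorm F 2 μ := by
  rw [← ENNReal.pow_le_pow_left_iff two_ne_zero, mul_pow, sq_eLpNorm_two, sq_eLpNorm_two]
  calc ∫⁻ y, ‖∫ x, K x y • F x ∂μ‖ₑ ^ 2 ∂ν
      ≤ ∫⁻ y, (∫⁻ x, ‖K x y‖ₑ * ‖F x‖ₑ ∂μ) ^ 2 ∂ν := by
        gcongr with y
        simpa only [enorm_smul] using enorm_integral_le_lintegral_enorm (fun x => K x y • F x)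
    _ ≤ C ^ 2 * ∫⁻ x, ‖F x‖ₑ ^ 2 ∂μ :=
        lintegral_sq_lintegral_mul_le_of_schur hK.enorm hcol hrow hF.enorm

end Schur

section Radial

variable {E : Type*} [NormedAddCommGroup E] [NormedSpace ℝ E] [FiniteDimensional ℝ E]
  [MeasurableSpace E] [BorelSpace E] [Nontrivial E] (μ : Measure E) [μ.IsAddHaarMeasure]

theorem lintegral_compl_ball_dist_rpow_neg {p r : ℝ} (hp : Module.finrank ℝ E < p) (hr : 0 < r)
    (x₀ : E) :
    ∫⁻ x in (ball x₀ r)ᶜ, ENNReal.ofReal (dist x x₀ ^ (-p)) ∂μ =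
      ENNReal.ofReal (Module.finrank ℝ E * μ.real (ball 0 1) * r ^ (Module.finrank ℝ E - p) /
        (p - Module.finrank ℝ E)) := by
  set n := Module.finrank ℝ E
  set f : ℝ → ℝ := (Ici r).indicator fun t => t ^ (-p)
  have hn : 1 ≤ n := Module.finrank_pos
  have hexp : (n : ℝ) - 1 - p < -1 := by linarith
  have hpolar : EqOn (fun t => t ^ (n - 1) • f t)
      ((Ici r).indicator fun t => t ^ ((n : ℝ) - 1 - p)) (Ioi 0) := by
    intro t (ht : 0 < t)
    by_cases htr : t ∈ Ici r
    · simp only [f, indicator_of_mem htr, smul_eq_mul, ← Real.rpow_natCast,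
        Nat.cast_sub hn, Nat.cast_one, ← Real.rpow_add ht, sub_eq_add_neg]
    · simp [f, htr]
  have hint : IntegrableOn (fun t => t ^ (n - 1) • f t) (Ioi 0) := by
    rw [integrableOn_congr_fun hpolar measurableSet_Ioi, IntegrableOn,
      integrable_indicator_iff measurableSet_Ici, IntegrableOn,
      Measure.restrict_restrict measurableSet_Ici, inter_eq_left.2 (Ici_subset_Ioi.2 hr)]
    exact (integrableOn_Ici_iff_integrableOn_Ioi (by simp)).mpr
      (integrableOn_Ioi_rpow_of_lt hexp hr)
  have hcompute : ∫ t in Ioi 0, t ^ (n - 1) • f t = r ^ ((n : ℝ) - p) / (p - n) := by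
    rw [setIntegral_congr_fun measurableSet_Ioi hpolar, setIntegral_indicator measurableSet_Ici,
      inter_eq_right.2 (Ici_subset_Ioi.2 hr), integral_Ici_eq_integral_Ioi,
      integral_Ioi_rpow_of_lt hexp hr, show (n : ℝ) - 1 - p + 1 = n - p by ring, neg_div,
      ← div_neg, neg_sub]
  calc ∫⁻ x in (ball x₀ r)ᶜ, ENNReal.ofReal (dist x x₀ ^ (-p)) ∂μ
      = ∫⁻ x, ENNReal.ofReal (f ‖x - x₀‖) ∂μ := by
        rw [← lintegral_indicator measurableSet_ball.compl]
        congr 1 with x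
        by_cases hx : r ≤ ‖x - x₀‖ <;> simp [f, hx, dist_eq_norm]
    _ = ∫⁻ x, ENNReal.ofReal (f ‖x‖) ∂μ :=
        lintegral_sub_right_eq_self (fun x => ENNReal.ofReal (f ‖x‖)) x₀
    _ = ENNReal.ofReal (∫ x, f ‖x‖ ∂μ) := by
        refine (ofReal_integral_eq_lintegral_ofReal ((integrable_fun_norm_addHaar μ).2 hint)
          (ae_of_all _ fun x => ?_)).symm
        exact indicator_nonneg (fun t ht => Real.rpow_nonneg (hr.le.trans ht) _) _
    _ = _ := by
        rw [integral_fun_norm_addHaar, hcompute, nsmul_eq_mul, smul_eq_mul, mul_div_assoc,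
          mul_assoc]

end Radial

theorem Complex.lintegral_compl_ball_dist_rpow_neg_five_halves {r : ℝ} (hr : 0 < r) (z₀ : ℂ) :
    ∫⁻ z in (ball z₀ r)ᶜ, ENNReal.ofReal (dist z z₀ ^ (-(5 / 2 : ℝ))) =
      ENNReal.ofReal (4 * Real.pi / √r) := by
  rw [lintegral_compl_ball_dist_rpow_neg volume (by norm_num [Complex.finrank_real_complex]) hr,
    Complex.finrank_real_complex, measureReal_def, Complex.volume_ball]
  congr 1
  simp only [ENNReal.ofReal_one, one_pow, one_mul, ENNReal.coe_toReal, NNReal.coe_real_pi,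
    Real.sqrt_eq_rpow]
  rw [show ((2 : ℕ) : ℝ) - 5 / 2 = -(1 / 2) by norm_num, Real.rpow_neg hr.le]
  ring

noncomputable def sqrtDistKernel {X : Type*} [PseudoMetricSpace X] (s : Set X) (x y : X) : ℝ :=
  √(infDist x s) * √(infDist y s) / dist x y ^ 3

theorem sqrtDistKernel_comm {X : Type*} [PseudoMetricSpace X] (s : Set X) (x y : X) :
    sqrtDistKernel s x y = sqrtDistKernel s y x := by
  rw [sqrtDistKernel, sqrtDistKernel, mul_comm, dist_comm]

theorem sqrtDistKernel_nonneg {X : Type*} [PseudoMetricSpace X] (s : Set X) (x y : X) :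
    0 ≤ sqrtDistKernel s x y := by
  unfold sqrtDistKernel
  positivity

theorem setLIntegral_sqrtDistKernel_le (s S : Set ℂ) (z₀ : ℂ)
    (hS : ∀ z ∈ S, infDist z₀ s ≤ dist z z₀ ∧ infDist z s ≤ dist z z₀) :
    ∫⁻ z in S, ENNReal.ofReal (sqrtDistKernel s z z₀) ≤ ENNReal.ofReal (4 * Real.pi) := by
  set d := infDist z₀ s
  obtain hd0 | hd := (infDist_nonneg : 0 ≤ d).eq_or_lt
  · simp [sqrtDistKernel, ← hd0]
  have hpt : ∀ z ∈ S, ENNReal.ofReal (sqrtDistKernel s z z₀) ≤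
      ENNReal.ofReal (√d * dist z z₀ ^ (-(5 / 2 : ℝ))) := by
    intro z hz
    have hρ : 0 < dist z z₀ := hd.trans_le (hS z hz).1
    refine ENNReal.ofReal_le_ofReal ?_
    calc sqrtDistKernel s z z₀ ≤ √(dist z z₀) * √d / dist z z₀ ^ 3 := by
          unfold sqrtDistKernel
          gcongr
          exact (hS z hz).2
      _ = √d * dist z z₀ ^ (-(5 / 2 : ℝ)) := by
          rw [Real.sqrt_eq_rpow (dist z z₀), ← Real.rpow_natCast, mul_comm, mul_div_assoc,
            ← Real.rpow_sub hρ]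
          norm_num
  have hsub : S ⊆ (ball z₀ d)ᶜ := fun z hz => by simpa using (hS z hz).1
  calc ∫⁻ z in S, ENNReal.ofReal (sqrtDistKernel s z z₀)
      ≤ ∫⁻ z in S, ENNReal.ofReal (√d * dist z z₀ ^ (-(5 / 2 : ℝ))) :=
        setLIntegral_mono (by fun_prop) hpt
    _ ≤ ∫⁻ z in (ball z₀ d)ᶜ, ENNReal.ofReal (√d * dist z z₀ ^ (-(5 / 2 : ℝ))) :=
        lintegral_mono_set hsub
    _ = ENNReal.ofReal √d * ENNReal.ofReal (4 * Real.pi / √d) := by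
        simp_rw [ENNReal.ofReal_mul (Real.sqrt_nonneg d)]
        rw [lintegral_const_mul' _ _ ENNReal.ofReal_ne_top,
          Complex.lintegral_compl_ball_dist_rpow_neg_five_halves hd]
    _ = ENNReal.ofReal (4 * Real.pi) := by
        rw [← ENNReal.ofReal_mul (Real.sqrt_nonneg d), mul_div_cancel₀]
        exact (Real.sqrt_pos.2 hd).ne'

theorem infDist_le_dist_of_mem_segment {E : Type*} [SeminormedAddCommGroup E] [NormedSpace ℝ E]
    {s : Set E} {x y z : E} (hz : z ∈ segment ℝ x y) (hzs : z ∈ s) : infDist x s ≤ dist x y :=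
  (infDist_le_dist_of_mem hzs).trans <|
    (dist_add_dist_of_mem_segment hz).symm ▸ le_add_of_nonneg_right dist_nonneg

theorem exists_mem_segment_im_eq {a : ℝ → ℝ} (ha : Continuous a) {z w : ℂ}
    (hz : a z.re ≤ z.im) (hw : w.im ≤ a w.re) : ∃ u ∈ segment ℝ z w, u.im = a u.re := by
  obtain ⟨u, hu, h⟩ := (convex_segment z w).isPreconnected.intermediate_value₂
    (left_mem_segment ℝ z w) (right_mem_segment ℝ z w) (ha.comp continuous_re).continuousOn
    continuous_im.continuousOn hz hw
  exact ⟨u, hu, h.symm⟩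

theorem infDist_graph_le_dist {a : ℝ → ℝ} (ha : Continuous a) {z w : ℂ}
    (hz : a z.re ≤ z.im) (hw : w.im ≤ a w.re) :
    infDist z {u : ℂ | u.im = a u.re} ≤ dist z w ∧
      infDist w {u : ℂ | u.im = a u.re} ≤ dist z w := by
  obtain ⟨u, hu, hΓ⟩ := exists_mem_segment_im_eq ha hz hw
  exact ⟨infDist_le_dist_of_mem_segment hu hΓ,
    dist_comm z w ▸ infDist_le_dist_of_mem_segment (segment_symm ℝ z w ▸ hu) hΓ⟩

theorem schur_operator_bound_general
    (a : ℝ → ℝ) (M : ℝ) (ha : LipschitzWith (Real.toNNReal M) a)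
    (Γ : Set ℂ) (hΓ : Γ = {w : ℂ | w.im = a w.re})
    (Ωp : Set ℂ) (hΩp : Ωp = {w : ℂ | a w.re < w.im})
    (Ωm : Set ℂ) (hΩm : Ωm = {w : ℂ | w.im < a w.re})
    (K : ℂ → ℂ → ℝ)
    (hK : ∀ w₁ w₂, K w₁ w₂ =
      Real.sqrt (infDist w₁ Γ) * Real.sqrt (infDist w₂ Γ) / ‖w₁ - w₂‖ ^ 3) :
    ∀ F : ℂ → ℂ, MemLp F 2 (volume.restrict Ωp) →
      eLpNorm (fun w₂ => ∫ w₁ in Ωp, (K w₁ w₂ : ℂ) * F w₁) 2 (volume.restrict Ωm) ≤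
        ENNReal.ofReal (4 * Real.pi) * eLpNorm F 2 (volume.restrict Ωp) := by
  intro F hF
  have hK : K = sqrtDistKernel Γ := by
    ext w₁ w₂
    rw [hK, sqrtDistKernel, dist_eq_norm]
  subst hK hΓ hΩp hΩm
  have hac : Continuous a := ha.continuous
  have hΩp : MeasurableSet {w : ℂ | a w.re < w.im} := measurableSet_lt (by fun_prop) (by fun_prop)
  have hΩm : MeasurableSet {w : ℂ | w.im < a w.re} := measurableSet_lt (by fun_prop) (by fun_prop)
  simp_rw [← Complex.real_smul]
  refine eLpNorm_integral_smul_le_of_schur (by unfold sqrtDistKernel; fun_prop) ?_ ?_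
    hF.aestronglyMeasurable
  · filter_upwards [ae_restrict_mem hΩm] with w hw
    simp_rw [Real.enorm_of_nonneg (sqrtDistKernel_nonneg _ _ _)]
    exact setLIntegral_sqrtDistKernel_le _ _ w fun z hz =>
      (infDist_graph_le_dist hac hz.le hw.le).symm
  · filter_upwards [ae_restrict_mem hΩp] with z hz
    simp_rw [Real.enorm_of_nonneg (sqrtDistKernel_nonneg _ _ _), sqrtDistKernel_comm _ z]
    exact setLIntegral_sqrtDistKernel_le _ _ z fun w hw =>
      dist_comm z w ▸ infDist_graph_le_dist hac hz.le hw.le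

/-- The integral operator `S` from `L²(Ω₊, dλ)` to `L²(Ω₋, dλ)` with kernel
`K(w₁,w₂) = d(w₁)^{1/2} d(w₂)^{1/2} |w₁-w₂|^{-3}`, given by
`SF(w₂) = ∬_{Ω₊} K(w₁,w₂) F(w₁) dλ(w₁)`, is bounded with operator norm at most `4π`. -/
theorem schur_operator_bound
    (a : ℝ → ℝ) (M : ℝ) (hM : 0 ≤ M) (ha : LipschitzWith (Real.toNNReal M) a)
    (Γ : Set ℂ) (hΓ : Γ = {w : ℂ | w.im = a w.re})
    (Ωp : Set ℂ) (hΩp : Ωp = {w : ℂ | a w.re < w.im})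
    (Ωm : Set ℂ) (hΩm : Ωm = {w : ℂ | w.im < a w.re})
    (K : ℂ → ℂ → ℝ)
    (hK : ∀ w₁ w₂, K w₁ w₂ =
      Real.sqrt (infDist w₁ Γ) * Real.sqrt (infDist w₂ Γ) / ‖w₁ - w₂‖ ^ 3) :
    ∀ F : ℂ → ℂ, MemLp F 2 (volume.restrict Ωp) →
      eLpNorm (fun w₂ => ∫ w₁ in Ωp, (K w₁ w₂ : ℂ) * F w₁) 2 (volume.restrict Ωm) ≤
        ENNReal.ofReal (4 * Real.pi) * eLpNorm F 2 (volume.restrict Ωp) :=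
  schur_operator_bound_general a M ha Γ hΓ Ωp hΩp Ωm hΩm K hK
end
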